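/- arXiv:math/9809020 — 5 statements merged into one kernel-verified Lean document; each statement's English description precedes it below -/
import Mathlib

section
/- Let n be an odd positive integer, let d be a divisor of n with n dividing d², and let ℓ be an integer with ℓ² ≡ 1 (mod d²/n). Then there exists an integer ℓ₀ with 1 ≤ ℓ₀ ≤ n, ℓ₀ ≡ ℓ (mod d²/n), and ℓ₀² ≡ 1 (mod n). -/
/-!
Split `n` into coprime prime powers. Modulo a power of an odd prime `p` the only square roots
of `1` are `±1`, because `p` cannot divide both `x - 1` and `x + 1`; so for `m ∣ p ^ k` a square
root of `1` modulo `m` is `±1` modulo `m`, and `±1` itself is the lift. Lifts along coprime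
factors are glued by the Chinese remainder theorem.
-/

namespace Int

theorem exists_modEq_and_modEq {a b : ℤ} (h : IsCoprime a b) (x y : ℤ) :
    ∃ z, z ≡ x [ZMOD a] ∧ z ≡ y [ZMOD b] := by
  obtain ⟨u, v, huv⟩ := h
  refine ⟨x * (v * b) + y * (u * a), modEq_iff_dvd.mpr ⟨u * (x - y), ?_⟩,
    modEq_iff_dvd.mpr ⟨v * (y - x), ?_⟩⟩
  · linear_combination -x * huv
  · linear_combination -y * huv

theorem modEq_one_or_neg_one_of_sq_modEq_one {p x : ℤ} (hp : Prime p) (hp2 : ¬p ∣ 2) (k : ℕ)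
    (hx : x ^ 2 ≡ 1 [ZMOD p ^ k]) : x ≡ 1 [ZMOD p ^ k] ∨ x ≡ -1 [ZMOD p ^ k] := by
  have hdvd : p ^ k ∣ (x - 1) * (x + 1) := by
    convert hx.symm.dvd using 1
    ring
  by_cases h : p ∣ x - 1
  · have hplus : ¬p ∣ x + 1 := fun h' => hp2 (by simpa using dvd_sub h' h)
    exact .inl (modEq_iff_dvd.mpr (hp.pow_dvd_of_dvd_mul_right k hplus hdvd)).symm
  · refine .inr (modEq_iff_dvd.mpr ?_).symm
    simpa using hp.pow_dvd_of_dvd_mul_left k h hdvd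

end Int

theorem Nat.sq_div_dvd_of_dvd_of_dvd_sq {n d : ℕ} (hd : d ∣ n) (hnd : n ∣ d ^ 2) :
    d ^ 2 / n ∣ d := by
  rcases n.eq_zero_or_pos with rfl | hn
  · simpa using hnd
  rw [Nat.div_dvd_iff_dvd_mul hnd hn, sq]
  exact mul_dvd_mul_right hd d

def SqrtOneLifts (n : ℕ) : Prop :=
  ∀ m : ℕ, m ∣ n → ∀ x : ℤ, x ^ 2 ≡ 1 [ZMOD m] → ∃ y, y ≡ x [ZMOD m] ∧ y ^ 2 ≡ 1 [ZMOD n]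

namespace SqrtOneLifts

theorem one : SqrtOneLifts 1 := fun _ _ x _ =>
  ⟨x, rfl, by simp [Int.ModEq]⟩

theorem prime_pow {p : ℕ} (hp : p.Prime) (hodd : Odd p) (k : ℕ) : SqrtOneLifts (p ^ k) := by
  intro m hm x hx
  obtain ⟨j, -, rfl⟩ := (Nat.dvd_prime_pow hp).mp hm
  have hp2 : ¬(p : ℤ) ∣ 2 := by
    rw [← Nat.cast_two, Int.natCast_dvd_natCast]
    intro h
    rw [(Nat.prime_dvd_prime_iff_eq hp Nat.prime_two).mp h] at hodd
    exact Nat.not_odd_iff_even.mpr even_two hodd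
  push_cast at hx ⊢
  rcases Int.modEq_one_or_neg_one_of_sq_modEq_one (Nat.prime_iff_prime_int.mp hp) hp2 j hx
    with h | h
  · exact ⟨1, h.symm, by simp [Int.ModEq.refl]⟩
  · exact ⟨-1, h.symm, by simp [Int.ModEq.refl]⟩

theorem mul {a b : ℕ} (hab : a.Coprime b) (ha : SqrtOneLifts a) (hb : SqrtOneLifts b) :
    SqrtOneLifts (a * b) := by
  intro m hm x hx
  have hsplit : m = m.gcd a * m.gcd b := by rw [← Nat.Coprime.gcd_mul m hab, Nat.gcd_eq_left hm]
  have hgcd : (m.gcd a).Coprime (m.gcd b) :=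
    (hab.coprime_dvd_left (m.gcd_dvd_right a)).coprime_dvd_right (m.gcd_dvd_right b)
  have hxa : x ^ 2 ≡ 1 [ZMOD m.gcd a] := hx.of_dvd (Int.natCast_dvd_natCast.mpr (m.gcd_dvd_left a))
  have hxb : x ^ 2 ≡ 1 [ZMOD m.gcd b] := hx.of_dvd (Int.natCast_dvd_natCast.mpr (m.gcd_dvd_left b))
  obtain ⟨ya, hya, hya2⟩ := ha _ (m.gcd_dvd_right a) x hxa
  obtain ⟨yb, hyb, hyb2⟩ := hb _ (m.gcd_dvd_right b) x hxb
  obtain ⟨z, hza, hzb⟩ := Int.exists_modEq_and_modEq (Nat.isCoprime_iff_coprime.mpr hab) ya yb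
  refine ⟨z, ?_, ?_⟩
  · rw [hsplit, Nat.cast_mul, ← Int.modEq_and_modEq_iff_modEq_mul (by simpa using hgcd)]
    exact ⟨(hza.of_dvd (Int.natCast_dvd_natCast.mpr (m.gcd_dvd_right a))).trans hya,
      (hzb.of_dvd (Int.natCast_dvd_natCast.mpr (m.gcd_dvd_right b))).trans hyb⟩
  · rw [Nat.cast_mul, ← Int.modEq_and_modEq_iff_modEq_mul (by simpa using hab)]
    exact ⟨(hza.pow 2).trans hya2, (hzb.pow 2).trans hyb2⟩

theorem of_odd {n : ℕ} (hn : Odd n) : SqrtOneLifts n := by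
  induction n using Nat.recOnPosPrimePosCoprime with
  | zero => simp at hn
  | one => exact one
  | prime_pow p k hp hk => exact prime_pow hp (hn.of_dvd_nat (dvd_pow_self p hk.ne')) k
  | coprime a b _ _ hab iha ihb =>
    exact mul hab (iha (hn.of_dvd_nat (dvd_mul_right a b))) (ihb (hn.of_dvd_nat (dvd_mul_left b a)))

end SqrtOneLifts

theorem Int.exists_modEq_mem_Icc_one {n : ℤ} (hn : 0 < n) (y : ℤ) :
    ∃ z, 1 ≤ z ∧ z ≤ n ∧ z ≡ y [ZMOD n] := by
  obtain ⟨z, hz0, hzn, hz⟩ := Int.existsUnique_equiv (y - 1) hn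
  exact ⟨z + 1, by omega, by omega, by simpa using hz.add_right 1⟩

theorem lift_sqrt_one_general (n d : ℕ) (hodd : Odd n)
    (hd : d ∣ n) (hnd : n ∣ d ^ 2) (ℓ : ℤ)
    (hl : ℓ ^ 2 ≡ 1 [ZMOD ((d ^ 2 / n : ℕ) : ℤ)]) :
    ∃ ℓ₀ : ℤ, 1 ≤ ℓ₀ ∧ ℓ₀ ≤ (n : ℤ) ∧ ℓ₀ ≡ ℓ [ZMOD ((d ^ 2 / n : ℕ) : ℤ)] ∧
      ℓ₀ ^ 2 ≡ 1 [ZMOD (n : ℤ)] := by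
  have hmn : d ^ 2 / n ∣ n := (Nat.sq_div_dvd_of_dvd_of_dvd_sq hd hnd).trans hd
  obtain ⟨y, hy, hy2⟩ := SqrtOneLifts.of_odd hodd _ hmn ℓ hl
  obtain ⟨z, hz1, hzn, hz⟩ := Int.exists_modEq_mem_Icc_one (Int.natCast_pos.mpr hodd.pos) y
  exact ⟨z, hz1, hzn, (hz.of_dvd (Int.natCast_dvd_natCast.mpr hmn)).trans hy,
    (hz.pow 2).trans hy2⟩

/-- Lifting a square root of 1 mod `d²/n` to one mod `n` in the same class mod `d²/n`. -/
theorem lift_sqrt_one (n d : ℕ) (hodd : Odd n) (hpos : 0 < n)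
    (hd : d ∣ n) (hnd : n ∣ d ^ 2) (ℓ : ℤ)
    (hl : ℓ ^ 2 ≡ 1 [ZMOD ((d ^ 2 / n : ℕ) : ℤ)]) :
    ∃ ℓ₀ : ℤ, 1 ≤ ℓ₀ ∧ ℓ₀ ≤ (n : ℤ) ∧ ℓ₀ ≡ ℓ [ZMOD ((d ^ 2 / n : ℕ) : ℤ)] ∧
      ℓ₀ ^ 2 ≡ 1 [ZMOD (n : ℤ)] :=
  lift_sqrt_one_general n d hodd hd hnd ℓ hl
end

section
/- Let n be an odd positive integer. For each divisor d of n with n | d² and each integer ℓ with ℓ² ≡ 1 (mod d²/n), define the n×n matrix B̃(d,ℓ) over ℂ, indexed by ℤ/nℤ, by B̃(d,ℓ)_{a,b} = 1 if n divides d·a and b ≡ a·ℓ (mod d), and 0 otherwise. Then B̃(d,ℓ) commutes with the diagonal matrix T̃² given by (T̃²)_{a,b} = δ_{a,b}·exp(2πi a²/n). -/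
open Complex

/-- The 0-1 matrix `B̃(d,ℓ)` indexed by `ℤ/nℤ`:
entry `(a,b)` is `1` iff `n ∣ d·a` and `b ≡ a·ℓ (mod d)`. -/
noncomputable def Btilde (n d : ℕ) (ℓ : ℤ) : Matrix (ZMod n) (ZMod n) ℂ :=
  fun a b => if n ∣ d * a.val ∧ (d : ℤ) ∣ ((b.val : ℤ) - (a.val : ℤ) * ℓ) then 1 else 0

/-- The diagonal matrix `T̃²`, with `(T̃²)_{a,a} = exp(2πi a²/n)`. -/
noncomputable def Ttilde2 (n : ℕ) : Matrix (ZMod n) (ZMod n) ℂ :=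
  fun a b => if a = b then Complex.exp (2 * Real.pi * Complex.I * ((a.val : ℂ) ^ 2) / n) else 0

/-- Key arithmetic fact: under the hypotheses, nonzero entries satisfy `a² ≡ b² (mod n)`. -/
lemma key_dvd (n d : ℕ) (hpos : 0 < n) (hnd : n ∣ d ^ 2) (ℓ : ℤ)
    (hl : ℓ ^ 2 ≡ 1 [ZMOD ((d ^ 2 / n : ℕ) : ℤ)])
    (A B : ℤ) (h1 : (n : ℤ) ∣ (d : ℤ) * A) (h2 : (d : ℤ) ∣ (B - A * ℓ)) :
    (n : ℤ) ∣ B ^ 2 - A ^ 2 := by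
  obtain ⟨t, ht⟩ := h1
  obtain ⟨k, hk⟩ := h2
  obtain ⟨m, hm⟩ := (Int.ModEq.dvd hl : ((d ^ 2 / n : ℕ) : ℤ) ∣ 1 - ℓ ^ 2)
  set e : ℤ := ((d ^ 2 / n : ℕ) : ℤ) with he
  have hne : (n : ℤ) * e = (d : ℤ) ^ 2 := by
    rw [he]; exact_mod_cast Nat.mul_div_cancel' hnd
  have hB : B = A * ℓ + d * k := by linarith
  have hAe : A ^ 2 * e * (n : ℤ) = (n : ℤ) * ((n : ℤ) * t ^ 2) := by
    have : ((d : ℤ) * A) ^ 2 = ((n : ℤ) * t) ^ 2 := by rw [ht]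
    nlinarith [this, hne]
  have hAe' : A ^ 2 * e = (n : ℤ) * t ^ 2 := by
    have hn0 : (n : ℤ) ≠ 0 := by exact_mod_cast hpos.ne'
    exact mul_right_cancel₀ hn0 (by linarith)
  refine ⟨-(t ^ 2 * m) + 2 * ℓ * k * t + e * k ^ 2, ?_⟩
  have : B ^ 2 - A ^ 2 = -(A ^ 2 * (1 - ℓ ^ 2)) + 2 * ℓ * k * ((d : ℤ) * A) + (d : ℤ) ^ 2 * k ^ 2 := by
    rw [hB]; ring
  rw [this, hm, ht, ← hne]
  have : A ^ 2 * (e * m) = (n : ℤ) * t ^ 2 * m := by rw [← mul_assoc, hAe']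
  nlinarith [this]

/-- `B̃(d,ℓ)` commutes with `T̃²`. -/
theorem Btilde_commute_Ttilde2 (n d : ℕ) [NeZero n] (hodd : Odd n) (hpos : 0 < n)
    (hd : d ∣ n) (hnd : n ∣ d ^ 2) (ℓ : ℤ)
    (hl : ℓ ^ 2 ≡ 1 [ZMOD ((d ^ 2 / n : ℕ) : ℤ)]) :
    Btilde n d ℓ * Ttilde2 n = Ttilde2 n * Btilde n d ℓ := by
  have hT : Ttilde2 n =
      Matrix.diagonal (fun a : ZMod n => Complex.exp (2 * Real.pi * Complex.I * ((a.val : ℂ) ^ 2) / n)) := by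
    ext a b
    by_cases h : a = b <;> simp [Ttilde2, Matrix.diagonal_apply, h]
  rw [hT]
  ext a b
  rw [Matrix.mul_diagonal, Matrix.diagonal_mul]
  unfold Btilde
  split_ifs with h
  · obtain ⟨h1, h2⟩ := h
    rw [one_mul, mul_one]
    have hdvd : (n : ℤ) ∣ (b.val : ℤ) ^ 2 - (a.val : ℤ) ^ 2 :=
      key_dvd n d hpos hnd ℓ hl (a.val : ℤ) (b.val : ℤ) (by exact_mod_cast h1) h2
    obtain ⟨j, hj⟩ := hdvd
    rw [Complex.exp_eq_exp_iff_exists_int]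
    refine ⟨j, ?_⟩
    have hn0 : (n : ℂ) ≠ 0 := Nat.cast_ne_zero.mpr hpos.ne'
    have hjc : ((b.val : ℂ)) ^ 2 - ((a.val : ℂ)) ^ 2 = (n : ℂ) * (j : ℂ) := by
      exact_mod_cast congrArg (Int.cast : ℤ → ℂ) hj
    have hb2 : ((b.val : ℂ)) ^ 2 = ((a.val : ℂ)) ^ 2 + (n : ℂ) * (j : ℂ) := by
      linear_combination hjc
    rw [hb2]
    field_simp
  · ring
end

section
/- Let n be an odd positive integer. The matrices B̃(d,ℓ), as d ranges over divisors of n with n | d² and ℓ ranges over residues modulo d²/n with ℓ² ≡ 1 (mod d²/n), are pairwise distinct and linearly independent over ℂ. -/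
/-!
Fix `(d, ℓ)` and put `A = n / d`, `e = d² / n`, so that `d = A e` and `n = A² e`. Lift `ℓ` to a
square root `ℓ₀` of `1` modulo `n` (Hensel, one odd prime at a time) and perturb it to
`x = ℓ₀ + m e`, where `m` is chosen so that `x² ≢ 1 (mod e p)` for every prime `p` with
`e p ∣ n`. The entry `(A, A x)` of `B̃(d, ℓ)` is `1`. If `B̃(d', ℓ')` is nonzero there, then
`d' = d t` with `t ∣ A` and `e t ∣ x - ℓ'`, `e t ∣ ℓ'² - 1`, so `e t ∣ x² - 1`, which forces
`t = 1`; then `ℓ' ≡ x ≡ ℓ (mod e)`. So every matrix of the family has an entry at which all the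
others vanish.
-/

open Complex

/-- Index set: pairs `(d,ℓ)` with `d ∣ n`, `n ∣ d²`, and `ℓ` a residue mod `d²/n`
with `ℓ² ≡ 1 (mod d²/n)`. -/
def BIndex (n : ℕ) : Type :=
  {p : ℕ × ℤ // p.1 ∣ n ∧ n ∣ p.1 ^ 2 ∧ 0 ≤ p.2 ∧ p.2 < ((p.1 ^ 2 / n : ℕ) : ℤ) ∧
    p.2 ^ 2 ≡ 1 [ZMOD ((p.1 ^ 2 / n : ℕ) : ℤ)]}

lemma exists_quadratic_root_of_sq_sub_one_eq_mul {F : Type*} [Field F] (h2 : (2 : F) ≠ 0)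
    {N k ℓ : F} (h : ℓ ^ 2 - 1 = N * k) : ∃ t, N * t ^ 2 + 2 * ℓ * t + k = 0 := by
  by_cases hN : N = 0
  · have hℓ : ℓ ≠ 0 := by rintro rfl; simp [hN] at h
    exact ⟨-k / (2 * ℓ), by rw [hN]; field_simp; ring⟩
  · exact ⟨(1 - ℓ) / N, by field_simp; linear_combination -h⟩

lemma ZMod.two_ne_zero_of_prime_ne_two {p : ℕ} [Fact p.Prime] (hp : p ≠ 2) : (2 : ZMod p) ≠ 0 :=
  Ring.two_ne_zero (by rwa [ZMod.ringChar_zmod_n])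

lemma Int.exists_sqrt_one_lift_prime_mul {p : ℕ} (hp : p.Prime) (hp2 : p ≠ 2) {N ℓ : ℤ}
    (h : N ∣ ℓ ^ 2 - 1) : ∃ ℓ₁, N ∣ ℓ₁ - ℓ ∧ p * N ∣ ℓ₁ ^ 2 - 1 := by
  have := Fact.mk hp
  obtain ⟨k, hk⟩ := h
  obtain ⟨t, ht⟩ := exists_quadratic_root_of_sq_sub_one_eq_mul
    (ZMod.two_ne_zero_of_prime_ne_two hp2) (N := (N : ZMod p)) (k := k) (ℓ := ℓ)
    (by exact_mod_cast congrArg (Int.cast (R := ZMod p)) hk)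
  obtain ⟨τ, rfl⟩ := ZMod.intCast_surjective t
  obtain ⟨u, hu⟩ := (ZMod.intCast_zmod_eq_zero_iff_dvd (N * τ ^ 2 + 2 * ℓ * τ + k) p).1
    (by push_cast; exact ht)
  exact ⟨ℓ + τ * N, ⟨τ, by ring⟩, ⟨u, by linear_combination hk + N * hu⟩⟩

lemma Int.exists_sqrt_one_lift_odd_mul {c : ℕ} (hc : Odd c) {N ℓ : ℤ} (h : N ∣ ℓ ^ 2 - 1) :
    ∃ ℓ₁, N ∣ ℓ₁ - ℓ ∧ N * c ∣ ℓ₁ ^ 2 - 1 := by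
  induction c using induction_on_primes generalizing ℓ with
  | zero => exact absurd hc (by decide)
  | one => exact ⟨ℓ, by simp, by simpa⟩
  | prime_mul p a hp ih =>
    obtain ⟨hpodd, haodd⟩ := Nat.odd_mul.1 hc
    obtain ⟨ℓ', hℓ', hℓ'sq⟩ := ih haodd h
    obtain ⟨ℓ₁, hℓ₁, hℓ₁sq⟩ :=
      exists_sqrt_one_lift_prime_mul hp (hpodd.ne_two_of_dvd_nat dvd_rfl) hℓ'sq
    refine ⟨ℓ₁, by simpa using dvd_add ((dvd_mul_right N a).trans hℓ₁) hℓ', ?_⟩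
    convert hℓ₁sq using 1
    push_cast
    ring

lemma exists_forall_prime_dvd_not_dvd_mul {n : ℕ} (hn : Odd n) (e : ℤ) {ℓ₀ : ℤ}
    (hℓ₀ : (n : ℤ) ∣ ℓ₀ ^ 2 - 1) :
    ∃ m : ℤ, ∀ p : ℕ, p.Prime → p ∣ n → ¬ (p : ℤ) ∣ m * (2 * ℓ₀ + m * e) := by
  set Φ := n.totient
  -- Modulo an odd prime `p ∣ n`, `e ^ Φ` is `0` if `p ∣ e` and `1` otherwise, so that `m ≡ ℓ₀` or
  -- `m * e ≡ -ℓ₀`, and `m * (2 * ℓ₀ + m * e)` is `2` or `-e ^ (Φ - 1)`, a unit, respectively.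
  have hΦ : Φ ≠ 0 := (Nat.totient_pos.2 hn.pos).ne'
  refine ⟨ℓ₀ * (1 - e ^ Φ - e ^ (Φ - 1) * e ^ Φ), fun p hp hpn hdvd => ?_⟩
  have := Fact.mk hp
  have hℓ : (ℓ₀ : ZMod p) ^ 2 = 1 := by
    have h := (ZMod.intCast_zmod_eq_zero_iff_dvd _ p).2 ((Int.natCast_dvd_natCast.2 hpn).trans hℓ₀)
    push_cast at h
    linear_combination h
  have hyE : (e : ZMod p) ^ (Φ - 1) * e = e ^ Φ := by
    rw [← pow_succ, Nat.sub_add_cancel (Nat.one_le_iff_ne_zero.2 hΦ)]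
  have h0 := (ZMod.intCast_zmod_eq_zero_iff_dvd _ p).2 hdvd
  push_cast at h0
  by_cases he : (e : ZMod p) = 0
  · rw [he, zero_pow hΦ] at h0
    apply ZMod.two_ne_zero_of_prime_ne_two (hn.ne_two_of_dvd_nat hpn)
    linear_combination h0 - 2 * hℓ
  · have hE : (e : ZMod p) ^ Φ = 1 := by
      obtain ⟨c, hc⟩ : p - 1 ∣ Φ := Nat.totient_prime hp ▸ Nat.totient_dvd_of_dvd hpn
      rw [hc, pow_mul, ZMod.pow_card_sub_one_eq_one he, one_pow]
    rw [hE] at h0 hyE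
    refine pow_ne_zero (Φ - 1) he ?_
    linear_combination -h0 - (e : ZMod p) ^ (Φ - 1) * (2 - (e : ZMod p) ^ (Φ - 1) * e) * hℓ
      + (e : ZMod p) ^ (Φ - 1) * hyE

lemma exists_dvd_sub_and_forall_prime_not_dvd_sq_sub_one {n e : ℕ} (hn : Odd n) (he : e ∣ n)
    {ℓ : ℤ} (hℓ : (e : ℤ) ∣ ℓ ^ 2 - 1) :
    ∃ x : ℤ, (e : ℤ) ∣ x - ℓ ∧ ∀ p : ℕ, p.Prime → e * p ∣ n → ¬ (e * p : ℤ) ∣ x ^ 2 - 1 := by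
  obtain ⟨c, rfl⟩ := he
  obtain ⟨ℓ₀, hℓ₀, hℓ₀sq⟩ := Int.exists_sqrt_one_lift_odd_mul (Nat.odd_mul.1 hn).2 hℓ
  obtain ⟨m, hm⟩ := exists_forall_prime_dvd_not_dvd_mul hn e (by exact_mod_cast hℓ₀sq)
  refine ⟨ℓ₀ + m * e, by rw [add_sub_right_comm]; exact hℓ₀.add (dvd_mul_left _ m),
    fun p hp hpn hdvd => hm p hp (dvd_of_mul_left_dvd hpn) ?_⟩
  have he0 : (e : ℤ) ≠ 0 := by exact_mod_cast left_ne_zero_of_mul hn.pos.ne'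
  have hsq : (ℓ₀ + m * e) ^ 2 - 1 = (ℓ₀ ^ 2 - 1) + e * (m * (2 * ℓ₀ + m * e)) := by ring
  have hpℓ₀ : (e * p : ℤ) ∣ ℓ₀ ^ 2 - 1 := (Int.natCast_dvd_natCast.2 hpn).trans (by exact_mod_cast hℓ₀sq)
  rw [← mul_dvd_mul_iff_left he0]
  exact (dvd_add_right hpℓ₀).1 (hsq ▸ hdvd)

lemma Btilde_intCast_apply {n d : ℕ} [NeZero n] (hd : d ∣ n) (ℓ α β : ℤ) :
    Btilde n d ℓ α β = if (n : ℤ) ∣ d * α ∧ (d : ℤ) ∣ β - α * ℓ then 1 else 0 := by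
  simp only [Btilde, ← ZMod.natCast_eq_zero_iff, ← ZMod.intCast_zmod_eq_zero_iff_dvd]
  push_cast
  simp only [ZMod.natCast_val, ZMod.cast_id', id, ZMod.cast_intCast hd]

lemma Nat.div_mul_sq_div_eq {n d : ℕ} (hd : d ∣ n) (hnd : n ∣ d ^ 2) : n / d * (d ^ 2 / n) = d := by
  rcases eq_or_ne d 0 with rfl | hd0
  · simp
  obtain ⟨A, rfl⟩ := hd
  have hA : A ∣ d := (Nat.mul_dvd_mul_iff_left hd0.bot_lt).1 (by rwa [← sq])
  rw [Nat.mul_div_cancel_left _ hd0.bot_lt, sq, Nat.mul_div_mul_left _ _ hd0.bot_lt,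
    Nat.mul_div_cancel' hA]

lemma Btilde_div_apply_eq_one {n d : ℕ} [NeZero n] {ℓ x : ℤ} (hd : d ∣ n) (hnd : n ∣ d ^ 2)
    (hxℓ : ((d ^ 2 / n : ℕ) : ℤ) ∣ x - ℓ) :
    Btilde n d ℓ ((n / d : ℕ) : ℤ) ((n / d : ℕ) * x : ℤ) = 1 := by
  rw [Btilde_intCast_apply hd, if_pos]
  refine ⟨by exact_mod_cast (Nat.mul_div_cancel' hd).symm.dvd, ?_⟩
  rw [← mul_sub]
  nth_rw 1 [← Nat.div_mul_sq_div_eq hd hnd]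
  push_cast
  exact mul_dvd_mul_left _ hxℓ

lemma eq_and_dvd_sub_of_Btilde_div_apply_ne_zero {n d d' : ℕ} [NeZero n] {ℓ' x : ℤ}
    (hd : d ∣ n) (hnd : n ∣ d ^ 2) (hd' : d' ∣ n)
    (hℓ' : ((d' ^ 2 / n : ℕ) : ℤ) ∣ ℓ' ^ 2 - 1)
    (hx : ∀ p : ℕ, p.Prime → d ^ 2 / n * p ∣ n → ¬ ((d ^ 2 / n : ℕ) * p : ℤ) ∣ x ^ 2 - 1)
    (h : Btilde n d' ℓ' ((n / d : ℕ) : ℤ) ((n / d : ℕ) * x : ℤ) ≠ 0) :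
    d' = d ∧ ((d ^ 2 / n : ℕ) : ℤ) ∣ x - ℓ' := by
  have hn : n ≠ 0 := NeZero.ne n
  set A := n / d
  set e := d ^ 2 / n
  have hnA : n = d * A := (Nat.mul_div_cancel' hd).symm
  have hdA : d = A * e := (Nat.div_mul_sq_div_eq hd hnd).symm
  have hA : A ≠ 0 := right_ne_zero_of_mul (hnA ▸ hn)
  rw [Btilde_intCast_apply hd', Ne, ite_eq_right_iff, not_forall] at h
  obtain ⟨⟨hnd'A, hd'x⟩, -⟩ := h
  obtain ⟨t, rfl⟩ : d ∣ d' := by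
    rw [hnA] at hnd'A
    exact Nat.dvd_of_mul_dvd_mul_right (Nat.pos_of_ne_zero hA) (by exact_mod_cast hnd'A)
  have htA : t ∣ A :=
    Nat.dvd_of_mul_dvd_mul_left (Nat.pos_of_ne_zero (left_ne_zero_of_mul (hnA ▸ hn))) (hnA ▸ hd')
  have hetx : (e * t : ℤ) ∣ x - ℓ' := by
    rw [← mul_sub, hdA] at hd'x
    push_cast at hd'x
    exact (mul_dvd_mul_iff_left (Int.natCast_ne_zero.2 hA)).1 (by rwa [← mul_assoc])
  have hetsq : (e * t : ℤ) ∣ x ^ 2 - 1 := by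
    rw [show x ^ 2 - 1 = (x - ℓ') * (x + ℓ') + (ℓ' ^ 2 - 1) by ring]
    have he' : (d * t) ^ 2 / n = e * t ^ 2 := by
      rw [mul_pow, ← Nat.div_mul_cancel hnd, mul_right_comm,
        Nat.mul_div_cancel _ (Nat.pos_of_ne_zero hn)]
    refine dvd_add (hetx.mul_right _) ((Dvd.intro (t : ℤ) ?_).trans hℓ')
    rw [he']
    push_cast
    ring
  obtain rfl : t = 1 := by
    by_contra ht
    obtain ⟨p, hp, hpt⟩ := Nat.exists_prime_and_dvd ht
    refine hx p hp ?_ ((mul_dvd_mul_left _ (Int.natCast_dvd_natCast.2 hpt)).trans hetsq)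
    exact (Nat.mul_dvd_mul_left e (hpt.trans htA)).trans ⟨A, by rw [hnA, hdA]; ring⟩
  exact ⟨mul_one d, by simpa using hetx⟩

lemma Int.eq_of_modEq_of_mem_Ico {a b m : ℤ} (h : a ≡ b [ZMOD m]) (ha₀ : 0 ≤ a) (ham : a < m)
    (hb₀ : 0 ≤ b) (hbm : b < m) : a = b := by
  rwa [Int.ModEq, Int.emod_eq_of_lt ha₀ ham, Int.emod_eq_of_lt hb₀ hbm] at h

lemma eq_of_Btilde_div_apply_ne_zero {n : ℕ} [NeZero n] (i : BIndex n) {x : ℤ}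
    (hxℓ : ((i.1.1 ^ 2 / n : ℕ) : ℤ) ∣ x - i.1.2)
    (hx : ∀ p : ℕ, p.Prime → i.1.1 ^ 2 / n * p ∣ n →
      ¬ ((i.1.1 ^ 2 / n : ℕ) * p : ℤ) ∣ x ^ 2 - 1) (j : BIndex n)
    (hj : Btilde n j.1.1 j.1.2 ((n / i.1.1 : ℕ) : ℤ) ((n / i.1.1 : ℕ) * x : ℤ) ≠ 0) : j = i := by
  obtain ⟨hd, hnd, hℓ₀, hℓe, -⟩ := i.2
  obtain ⟨hd', -, hℓ'₀, hℓ'e, hℓ'sq⟩ := j.2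
  obtain ⟨hdd, hxℓ'⟩ :=
    eq_and_dvd_sub_of_Btilde_div_apply_ne_zero hd hnd hd' hℓ'sq.symm.dvd hx hj
  rw [hdd] at hℓ'e
  refine Subtype.ext (Prod.ext hdd (Int.eq_of_modEq_of_mem_Ico ?_ hℓ'₀ hℓ'e hℓ₀ hℓe))
  exact (Int.modEq_iff_dvd.2 hxℓ').trans (Int.modEq_iff_dvd.2 hxℓ).symm

lemma Btilde_exists_isolated_entry {n : ℕ} [NeZero n] (hn : Odd n) (i : BIndex n) :
    ∃ a b : ZMod n, Btilde n i.1.1 i.1.2 a b = 1 ∧ ∀ j ≠ i, Btilde n j.1.1 j.1.2 a b = 0 := by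
  obtain ⟨hd, hnd, -, -, hℓ⟩ := i.2
  have he : i.1.1 ^ 2 / n ∣ n := (Dvd.intro_left _ (Nat.div_mul_sq_div_eq hd hnd)).trans hd
  obtain ⟨x, hxℓ, hx⟩ := exists_dvd_sub_and_forall_prime_not_dvd_sq_sub_one hn he hℓ.symm.dvd
  exact ⟨_, _, Btilde_div_apply_eq_one hd hnd hxℓ,
    fun j hj => by_contra fun h => hj (eq_of_Btilde_div_apply_ne_zero i hxℓ hx j h)⟩

theorem Btilde_linearIndependent_general (n : ℕ) [NeZero n] (hodd : Odd n) :
    Function.Injective (fun p : BIndex n => Btilde n p.1.1 p.1.2) ∧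
    LinearIndependent ℂ (fun p : BIndex n => Btilde n p.1.1 p.1.2) := by
  choose a b hone hzero using Btilde_exists_isolated_entry hodd
  have hli : LinearIndependent ℂ (fun p : BIndex n => Btilde n p.1.1 p.1.2) :=
    .of_pairwise_dual_eq_zero_one _ (fun i => Matrix.entryLinearMap ℂ ℂ (a i) (b i))
      (fun i j hij => hzero i j hij.symm) hone
  exact ⟨hli.injective, hli⟩

/-- The matrices `B̃(d,ℓ)` are pairwise distinct and linearly independent over `ℂ`. -/
theorem Btilde_linearIndependent (n : ℕ) [NeZero n] (hodd : Odd n) (hpos : 0 < n) :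
    Function.Injective (fun p : BIndex n => Btilde n p.1.1 p.1.2) ∧
    LinearIndependent ℂ (fun p : BIndex n => Btilde n p.1.1 p.1.2) :=
  Btilde_linearIndependent_general n hodd
end

section
/- The subgroup Γ_θ of SL₂(ℤ) generated by the matrices [[0,1],[-1,0]] and [[1,2],[0,1]] has index 3 in SL₂(ℤ), with left coset representatives I, [[1,1],[0,1]], and [[1,0],[1,1]]. -/
open Matrix

/-- The matrix `[[0,1],[-1,0]]` as an element of `SL₂(ℤ)`. -/
def Wmat : Matrix.SpecialLinearGroup (Fin 2) ℤ :=
  ⟨!![0, 1; -1, 0], by norm_num [Matrix.det_fin_two_of]⟩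

/-- The matrix `[[1,2],[0,1]]` as an element of `SL₂(ℤ)`. -/
def T2mat : Matrix.SpecialLinearGroup (Fin 2) ℤ :=
  ⟨!![1, 2; 0, 1], by norm_num [Matrix.det_fin_two_of]⟩

/-- The matrix `[[1,1],[0,1]]` as an element of `SL₂(ℤ)`. -/
def Tmat : Matrix.SpecialLinearGroup (Fin 2) ℤ :=
  ⟨!![1, 1; 0, 1], by norm_num [Matrix.det_fin_two_of]⟩

/-- The matrix `[[1,0],[1,1]]` as an element of `SL₂(ℤ)`. -/
def Lmat : Matrix.SpecialLinearGroup (Fin 2) ℤ :=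
  ⟨!![1, 0; 1, 1], by norm_num [Matrix.det_fin_two_of]⟩

/-- The theta group `Γ_θ = ⟨[[0,1],[-1,0]], [[1,2],[0,1]]⟩`. -/
def GammaTheta : Subgroup (Matrix.SpecialLinearGroup (Fin 2) ℤ) :=
  Subgroup.closure {Wmat, T2mat}

/- ### Auxiliary material -/

abbrev SL2Z := Matrix.SpecialLinearGroup (Fin 2) ℤ
abbrev SL2Z2 := Matrix.SpecialLinearGroup (Fin 2) (ZMod 2)

instance : DecidableEq SL2Z2 :=
  fun a b => decidable_of_iff (a.1 = b.1) Subtype.ext_iff.symm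

instance : Fintype SL2Z2 :=
  Subtype.fintype fun A : Matrix (Fin 2) (Fin 2) (ZMod 2) => A.det = 1

/-- Reduction mod 2. -/
noncomputable def phi2 : SL2Z →* SL2Z2 :=
  Matrix.SpecialLinearGroup.map (Int.castRingHom (ZMod 2))

def wbar : SL2Z2 := ⟨!![0, 1; 1, 0], by decide⟩

lemma phi2_coe (g : SL2Z) (i j : Fin 2) :
    (phi2 g).1 i j = ((g.1 i j : ℤ) : ZMod 2) := rfl

/-- Parity predicate: g is congruent to I or to [[0,1],[1,0]] mod 2. -/
def CC (g : SL2Z) : Prop := phi2 g = 1 ∨ phi2 g = wbar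

lemma phi2_explicit (g : SL2Z) (x : SL2Z2)
    (h : ∀ i j, ((g.1 i j : ℤ) : ZMod 2) = x.1 i j) : phi2 g = x := by
  apply Subtype.ext
  ext i j
  rw [phi2_coe]; exact h i j

lemma CC_W : CC Wmat := by
  right
  apply phi2_explicit
  intro i j; fin_cases i <;> fin_cases j <;> simp [Wmat, wbar] <;> decide

lemma CC_T2 : CC T2mat := by
  left
  apply phi2_explicit
  intro i j; fin_cases i <;> fin_cases j <;> simp [T2mat] <;> decide

lemma CC_mul {g h : SL2Z} (hg : CC g) (hh : CC h) : CC (g * h) := by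
  unfold CC at *
  rw [_root_.map_mul]
  rcases hg with hg | hg <;> rcases hh with hh | hh <;> rw [hg, hh] <;>
    first
      | (left; decide)
      | (right; decide)

lemma CC_inv {g : SL2Z} (hg : CC g) : CC g⁻¹ := by
  unfold CC at *
  rw [_root_.map_inv]
  rcases hg with hg | hg <;> rw [hg]
  · left; decide
  · right; decide

lemma CC_of_mem {g : SL2Z} (hg : g ∈ GammaTheta) : CC g := by
  induction hg using Subgroup.closure_induction with
  | mem x hx =>
    rcases hx with hx | hx
    · rw [hx]; exact CC_W
    · rw [Set.mem_singleton_iff] at hx; rw [hx]; exact CC_T2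
  | one => left; simp
  | mul x y _ _ hx hy => exact CC_mul hx hy
  | inv x _ hx => exact CC_inv hx

lemma zmod2_cast_eq_zero (n : ℤ) : ((n : ZMod 2) = 0) ↔ n % 2 = 0 := by
  rw [ZMod.intCast_zmod_eq_zero_iff_dvd]
  omega

lemma zmod2_cast_eq_one (n : ℤ) : ((n : ZMod 2) = 1) ↔ n % 2 = 1 := by
  have : ((n : ZMod 2) = 1) ↔ ((n - 1 : ℤ) : ZMod 2) = 0 := by
    push_cast
    constructor
    · intro h; rw [h]; ring
    · intro h; linear_combination h
  rw [this, ZMod.intCast_zmod_eq_zero_iff_dvd]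
  omega

/-- Parity consequences of `CC`. -/
lemma CC_parity {g : SL2Z} (hg : CC g) :
    (g.1 0 0 % 2 = 1 ∧ g.1 0 1 % 2 = 0 ∧ g.1 1 0 % 2 = 0 ∧ g.1 1 1 % 2 = 1) ∨
    (g.1 0 0 % 2 = 0 ∧ g.1 0 1 % 2 = 1 ∧ g.1 1 0 % 2 = 1 ∧ g.1 1 1 % 2 = 0) := by
  rcases hg with h | h
  · left
    have h' : ∀ i j, ((g.1 i j : ℤ) : ZMod 2) = (1 : SL2Z2).1 i j := by
      intro i j; rw [← phi2_coe, h]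
    have h00 := h' 0 0; have h01 := h' 0 1; have h10 := h' 1 0; have h11 := h' 1 1
    simp only [Matrix.SpecialLinearGroup.coe_one, Matrix.one_apply_eq, Matrix.one_apply_ne,
      Fin.zero_eq_one_iff, Matrix.one_apply] at h00 h01 h10 h11
    norm_num at h01 h10
    exact ⟨(zmod2_cast_eq_one _).1 h00, (zmod2_cast_eq_zero _).1 h01,
      (zmod2_cast_eq_zero _).1 h10, (zmod2_cast_eq_one _).1 h11⟩
  · right
    have h' : ∀ i j, ((g.1 i j : ℤ) : ZMod 2) = wbar.1 i j := by
      intro i j; rw [← phi2_coe, h]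
    have h00 := h' 0 0; have h01 := h' 0 1; have h10 := h' 1 0; have h11 := h' 1 1
    simp only [wbar, Matrix.cons_val', Matrix.cons_val_zero, Matrix.cons_val_one,
      Matrix.head_cons, Matrix.empty_val', Matrix.cons_val_fin_one, Matrix.head_fin_const] at h00 h01 h10 h11
    exact ⟨(zmod2_cast_eq_zero _).1 h00, (zmod2_cast_eq_one _).1 h01,
      (zmod2_cast_eq_one _).1 h10, (zmod2_cast_eq_zero _).1 h11⟩

lemma det_entries (g : SL2Z) : g.1 0 0 * g.1 1 1 - g.1 0 1 * g.1 1 0 = 1 := by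
  have := g.2
  rwa [Matrix.det_fin_two] at this

/-- Explicit inverse of W. -/
def Winv : SL2Z := ⟨!![0, -1; 1, 0], by norm_num [Matrix.det_fin_two_of]⟩
/-- Explicit inverse of T2. -/
def T2inv : SL2Z := ⟨!![1, -2; 0, 1], by norm_num [Matrix.det_fin_two_of]⟩

lemma W_Winv : Wmat * Winv = 1 := by
  apply Subtype.ext
  show Wmat.1 * Winv.1 = 1
  norm_num [Wmat, Winv, Matrix.mul_fin_two]
  exact Matrix.one_fin_two.symm

lemma T2_T2inv : T2mat * T2inv = 1 := by
  apply Subtype.ext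
  show T2mat.1 * T2inv.1 = 1
  norm_num [T2mat, T2inv, Matrix.mul_fin_two]
  exact Matrix.one_fin_two.symm

lemma T2inv_T2 : T2inv * T2mat = 1 := by
  apply Subtype.ext
  show T2inv.1 * T2mat.1 = 1
  norm_num [T2mat, T2inv, Matrix.mul_fin_two]
  exact Matrix.one_fin_two.symm

lemma Winv_mem : Winv ∈ GammaTheta := by
  have hW : Wmat ∈ GammaTheta := Subgroup.subset_closure (by left; rfl)
  have h : Wmat⁻¹ = Winv := inv_eq_iff_mul_eq_one.2 W_Winv
  rw [← h]; exact inv_mem hW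

lemma W_mem : Wmat ∈ GammaTheta := Subgroup.subset_closure (by left; rfl)
lemma T2_mem : T2mat ∈ GammaTheta := Subgroup.subset_closure (by right; rfl)
lemma T2inv_mem : T2inv ∈ GammaTheta := by
  have h : T2mat⁻¹ = T2inv := inv_eq_iff_mul_eq_one.2 T2_T2inv
  rw [← h]; exact inv_mem T2_mem

lemma CC_Winv : CC Winv := CC_of_mem Winv_mem
lemma CC_T2inv : CC T2inv := CC_of_mem T2inv_mem

/-- Entries of a product with an explicit left factor. -/
lemma mul_entries (x g : SL2Z) :
    (x * g).1 = !![x.1 0 0 * g.1 0 0 + x.1 0 1 * g.1 1 0,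
                   x.1 0 0 * g.1 0 1 + x.1 0 1 * g.1 1 1;
                   x.1 1 0 * g.1 0 0 + x.1 1 1 * g.1 1 0,
                   x.1 1 0 * g.1 0 1 + x.1 1 1 * g.1 1 1] := by
  show x.1 * g.1 = _
  rw [Matrix.eta_fin_two x.1, Matrix.eta_fin_two g.1, Matrix.mul_fin_two]
  norm_num

/-- Case c = 0 of the Euclid argument. -/
lemma keyA : ∀ n : ℕ, ∀ g : SL2Z, CC g → g.1 1 0 = 0 → (g.1 0 1).natAbs ≤ n →
    g ∈ GammaTheta := by
  intro n
  induction n with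
  | zero =>
    intro g hC hc hb
    have hb0 : g.1 0 1 = 0 := by omega
    have hdet := det_entries g
    rw [hc, hb0] at hdet
    simp at hdet
    rcases Int.eq_one_or_neg_one_of_mul_eq_one' hdet with ⟨ha, hd⟩ | ⟨ha, hd⟩
    · have : g = 1 := by
        apply Subtype.ext
        rw [Matrix.eta_fin_two g.1, ha, hd, hc, hb0]
        exact Matrix.one_fin_two.symm
      rw [this]; exact one_mem _
    · have : g = Wmat * Wmat := by
        apply Subtype.ext
        rw [Matrix.eta_fin_two g.1, ha, hd, hc, hb0]
        show _ = Wmat.1 * Wmat.1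
        norm_num [Wmat, Matrix.mul_fin_two]
      rw [this]; exact mul_mem W_mem W_mem
  | succ n ih =>
    intro g hC hc hb
    have hdet := det_entries g
    rw [hc] at hdet
    simp at hdet
    have hpar := CC_parity hC
    have had : g.1 0 0 = 1 ∧ g.1 1 1 = 1 ∨ g.1 0 0 = -1 ∧ g.1 1 1 = -1 :=
      Int.eq_one_or_neg_one_of_mul_eq_one' hdet
    have hbeven : g.1 0 1 % 2 = 0 := by
      rcases hpar with ⟨_, h, _, _⟩ | ⟨h, _, _, _⟩
      · exact h
      · omega
    by_cases hb0 : g.1 0 1 = 0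
    · exact ih g hC hc (by omega)
    · -- multiply by T2 or T2inv to shrink b
      by_cases hsgn : 0 < g.1 0 1 * g.1 1 1
      · -- use g = T2 * (T2inv * g)
        have hmem : T2inv * g ∈ GammaTheta := by
          apply ih _ (CC_mul CC_T2inv hC)
          · rw [mul_entries]
            show T2inv.1 1 0 * g.1 0 0 + T2inv.1 1 1 * g.1 1 0 = 0
            have e0 : T2inv.1 1 0 = 0 := rfl
            have e1 : T2inv.1 1 1 = 1 := rfl
            rw [e0, e1]; omega
          · rw [mul_entries]
            show (T2inv.1 0 0 * g.1 0 1 + T2inv.1 0 1 * g.1 1 1).natAbs ≤ n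
            have e0 : T2inv.1 0 0 = 1 := rfl
            have e1 : T2inv.1 0 1 = -2 := rfl
            rw [e0, e1]
            rcases had with ⟨_, hd⟩ | ⟨_, hd⟩ <;> rw [hd] at hsgn ⊢ <;> omega
        have : g = T2mat * (T2inv * g) := by
          rw [← mul_assoc, T2_T2inv, one_mul]
        rw [this]; exact mul_mem T2_mem hmem
      · have hsgn' : g.1 0 1 * g.1 1 1 < 0 := by
          rcases had with ⟨_, hd⟩ | ⟨_, hd⟩ <;> rw [hd] at hsgn ⊢ <;> omega
        have hmem : T2mat * g ∈ GammaTheta := by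
          apply ih _ (CC_mul CC_T2 hC)
          · rw [mul_entries]
            show T2mat.1 1 0 * g.1 0 0 + T2mat.1 1 1 * g.1 1 0 = 0
            have e0 : T2mat.1 1 0 = 0 := rfl
            have e1 : T2mat.1 1 1 = 1 := rfl
            rw [e0, e1]; omega
          · rw [mul_entries]
            show (T2mat.1 0 0 * g.1 0 1 + T2mat.1 0 1 * g.1 1 1).natAbs ≤ n
            have e0 : T2mat.1 0 0 = 1 := rfl
            have e1 : T2mat.1 0 1 = 2 := rfl
            rw [e0, e1]
            rcases had with ⟨_, hd⟩ | ⟨_, hd⟩ <;> rw [hd] at hsgn' ⊢ <;> omega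
        have : g = T2inv * (T2mat * g) := by
          rw [← mul_assoc, T2inv_T2, one_mul]
        rw [this]; exact mul_mem T2inv_mem hmem

lemma keyB : ∀ n m : ℕ, ∀ g : SL2Z, CC g → (g.1 1 0).natAbs ≤ n →
    (g.1 0 0).natAbs ≤ m → g ∈ GammaTheta := by
  intro n
  induction n with
  | zero =>
    intro m g hC hc _
    exact keyA (g.1 0 1).natAbs g hC (by omega) le_rfl
  | succ n ihn =>
    intro m
    induction m with
    | zero =>
      intro g hC hc ha
      by_cases hc0 : g.1 1 0 = 0
      · exact keyA _ g hC hc0 le_rfl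
      · -- a = 0, so swap with W; new c = a = 0
        have hmem : Winv * g ∈ GammaTheta := by
          apply keyA (((Winv * g).1 0 1).natAbs) _ (CC_mul CC_Winv hC) _ le_rfl
          rw [mul_entries]
          show Winv.1 1 0 * g.1 0 0 + Winv.1 1 1 * g.1 1 0 = 0
          have e0 : Winv.1 1 0 = 1 := rfl
          have e1 : Winv.1 1 1 = 0 := rfl
          rw [e0, e1]
          omega
        have : g = Wmat * (Winv * g) := by rw [← mul_assoc, W_Winv, one_mul]
        rw [this]; exact mul_mem W_mem hmem
    | succ m ihm =>
      intro g hC hc ha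
      by_cases hc0 : g.1 1 0 = 0
      · exact keyA _ g hC hc0 le_rfl
      by_cases ham : (g.1 0 0).natAbs ≤ m
      · exact ihm g hC hc ham
      have hpar := CC_parity hC
      have hne : (g.1 0 0).natAbs ≠ (g.1 1 0).natAbs := by
        rcases hpar with ⟨h1, _, h3, _⟩ | ⟨h1, _, h3, _⟩ <;> omega
      by_cases hlt : (g.1 0 0).natAbs < (g.1 1 0).natAbs
      · -- swap: Winv * g has c' = a, smaller
        have hmem : Winv * g ∈ GammaTheta := by
          apply ihn (((Winv * g).1 0 0).natAbs) _ (CC_mul CC_Winv hC) _ le_rfl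
          rw [mul_entries]
          show (Winv.1 1 0 * g.1 0 0 + Winv.1 1 1 * g.1 1 0).natAbs ≤ n
          have e0 : Winv.1 1 0 = 1 := rfl
          have e1 : Winv.1 1 1 = 0 := rfl
          rw [e0, e1]
          omega
        have : g = Wmat * (Winv * g) := by rw [← mul_assoc, W_Winv, one_mul]
        rw [this]; exact mul_mem W_mem hmem
      · -- |a| > |c| > 0 : use T2-step to shrink a
        have hgt : (g.1 1 0).natAbs < (g.1 0 0).natAbs := by omega
        by_cases hsgn : 0 < g.1 0 0 * g.1 1 0
        · have hmem : T2inv * g ∈ GammaTheta := by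
            apply ihm _ (CC_mul CC_T2inv hC)
            · rw [mul_entries]
              show (T2inv.1 1 0 * g.1 0 0 + T2inv.1 1 1 * g.1 1 0).natAbs ≤ n + 1
              have e0 : T2inv.1 1 0 = 0 := rfl
              have e1 : T2inv.1 1 1 = 1 := rfl
              rw [e0, e1]; omega
            · rw [mul_entries]
              show (T2inv.1 0 0 * g.1 0 0 + T2inv.1 0 1 * g.1 1 0).natAbs ≤ m
              have e0 : T2inv.1 0 0 = 1 := rfl
              have e1 : T2inv.1 0 1 = -2 := rfl
              rw [e0, e1]
              rcases mul_pos_iff.1 hsgn with ⟨h1, h2⟩ | ⟨h1, h2⟩ <;> omega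
          have : g = T2mat * (T2inv * g) := by rw [← mul_assoc, T2_T2inv, one_mul]
          rw [this]; exact mul_mem T2_mem hmem
        · have hsgn' : g.1 0 0 * g.1 1 0 < 0 := by
            rcases (lt_or_eq_of_le (not_lt.1 hsgn)) with h | h
            · exact h
            · exfalso
              have : g.1 0 0 = 0 ∨ g.1 1 0 = 0 := mul_eq_zero.1 h
              rcases this with h' | h' <;> omega
          have hmem : T2mat * g ∈ GammaTheta := by
            apply ihm _ (CC_mul CC_T2 hC)
            · rw [mul_entries]
              show (T2mat.1 1 0 * g.1 0 0 + T2mat.1 1 1 * g.1 1 0).natAbs ≤ n + 1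
              have e0 : T2mat.1 1 0 = 0 := rfl
              have e1 : T2mat.1 1 1 = 1 := rfl
              rw [e0, e1]; omega
            · rw [mul_entries]
              show (T2mat.1 0 0 * g.1 0 0 + T2mat.1 0 1 * g.1 1 0).natAbs ≤ m
              have e0 : T2mat.1 0 0 = 1 := rfl
              have e1 : T2mat.1 0 1 = 2 := rfl
              rw [e0, e1]
              rcases mul_neg_iff.1 hsgn' with ⟨h1, h2⟩ | ⟨h1, h2⟩ <;> omega
          have : g = T2inv * (T2mat * g) := by rw [← mul_assoc, T2inv_T2, one_mul]
          rw [this]; exact mul_mem T2inv_mem hmem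

lemma mem_of_CC {g : SL2Z} (hC : CC g) : g ∈ GammaTheta :=
  keyB (g.1 1 0).natAbs (g.1 0 0).natAbs g hC le_rfl le_rfl

lemma mem_iff_CC (g : SL2Z) : g ∈ GammaTheta ↔ CC g :=
  ⟨CC_of_mem, mem_of_CC⟩

/-- Explicit inverses of T and L. -/
def Tinv : SL2Z := ⟨!![1, -1; 0, 1], by norm_num [Matrix.det_fin_two_of]⟩
def Linv : SL2Z := ⟨!![1, 0; -1, 1], by norm_num [Matrix.det_fin_two_of]⟩

lemma T_Tinv : Tmat * Tinv = 1 := by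
  apply Subtype.ext
  show Tmat.1 * Tinv.1 = 1
  norm_num [Tmat, Tinv, Matrix.mul_fin_two]
  exact Matrix.one_fin_two.symm

lemma L_Linv : Lmat * Linv = 1 := by
  apply Subtype.ext
  show Lmat.1 * Linv.1 = 1
  norm_num [Lmat, Linv, Matrix.mul_fin_two]
  exact Matrix.one_fin_two.symm

lemma Tinv_eq : Tmat⁻¹ = Tinv := by
  rw [inv_eq_iff_mul_eq_one, T_Tinv]

lemma Linv_eq : Lmat⁻¹ = Linv := by
  rw [inv_eq_iff_mul_eq_one, L_Linv]

def tbar : SL2Z2 := ⟨!![1, 1; 0, 1], by decide⟩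
def lbar : SL2Z2 := ⟨!![1, 0; 1, 1], by decide⟩
def tibar : SL2Z2 := tbar
def libar : SL2Z2 := lbar

lemma phi2_T : phi2 Tmat = tbar := by
  apply phi2_explicit
  intro i j; fin_cases i <;> fin_cases j <;> simp [Tmat, tbar] <;> decide

lemma phi2_L : phi2 Lmat = lbar := by
  apply phi2_explicit
  intro i j; fin_cases i <;> fin_cases j <;> simp [Lmat, lbar] <;> decide

lemma phi2_Tinv : phi2 Tinv = tbar := by
  apply phi2_explicit
  intro i j; fin_cases i <;> fin_cases j <;> simp [Tinv, tbar] <;> decide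

lemma phi2_Linv : phi2 Linv = lbar := by
  apply phi2_explicit
  intro i j; fin_cases i <;> fin_cases j <;> simp [Linv, lbar] <;> decide

lemma partition_zmod : ∀ x : SL2Z2,
    (x = 1 ∨ x = wbar) ∨ (tbar * x = 1 ∨ tbar * x = wbar) ∨
    (lbar * x = 1 ∨ lbar * x = wbar) := by decide

/-- `Γ_θ` has index 3 in `SL₂(ℤ)`, with left coset representatives
`I`, `[[1,1],[0,1]]` and `[[1,0],[1,1]]`. -/
theorem gammaTheta_index_three :
    GammaTheta.index = 3 ∧
    (∀ g : Matrix.SpecialLinearGroup (Fin 2) ℤ,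
      g ∈ GammaTheta ∨ Tmat⁻¹ * g ∈ GammaTheta ∨ Lmat⁻¹ * g ∈ GammaTheta) ∧
    ¬ Tmat ∈ GammaTheta ∧ ¬ Lmat ∈ GammaTheta ∧ ¬ Tmat⁻¹ * Lmat ∈ GammaTheta := by
  have hpart : ∀ g : SL2Z,
      g ∈ GammaTheta ∨ Tmat⁻¹ * g ∈ GammaTheta ∨ Lmat⁻¹ * g ∈ GammaTheta := by
    intro g
    rw [mem_iff_CC, mem_iff_CC, mem_iff_CC, Tinv_eq, Linv_eq]
    unfold CC
    rw [_root_.map_mul, _root_.map_mul, phi2_Tinv, phi2_Linv]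
    exact partition_zmod (phi2 g)
  have hT : ¬ Tmat ∈ GammaTheta := by
    rw [mem_iff_CC]
    unfold CC
    rw [phi2_T]
    push_neg
    constructor <;> decide
  have hL : ¬ Lmat ∈ GammaTheta := by
    rw [mem_iff_CC]
    unfold CC
    rw [phi2_L]
    push_neg
    constructor <;> decide
  have hTL : ¬ Tmat⁻¹ * Lmat ∈ GammaTheta := by
    rw [mem_iff_CC, Tinv_eq]
    unfold CC
    rw [_root_.map_mul, phi2_Tinv, phi2_L]
    push_neg
    constructor <;> decide
  refine ⟨?_, hpart, hT, hL, hTL⟩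
  -- index computation
  have hLT : ¬ Lmat⁻¹ * Tmat ∈ GammaTheta := by
    intro h
    apply hTL
    have := inv_mem h
    rwa [_root_.mul_inv_rev, inv_inv] at this
  have hbij : Function.Bijective
      (fun i : Fin 3 => (QuotientGroup.mk (![(1 : SL2Z), Tmat, Lmat] i) : SL2Z ⧸ GammaTheta)) := by
    constructor
    · intro i j hij
      fin_cases i <;> fin_cases j
      · rfl
      · exact absurd (QuotientGroup.eq.1 hij) (by simpa using hT)
      · exact absurd (QuotientGroup.eq.1 hij) (by simpa using hL)
      · exfalso
        have h' : Tmat⁻¹ * 1 ∈ GammaTheta := QuotientGroup.eq.1 hij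
        rw [mul_one] at h'
        exact hT (by simpa using inv_mem h')
      · rfl
      · exact absurd (QuotientGroup.eq.1 hij) hTL
      · exfalso
        have h' : Lmat⁻¹ * 1 ∈ GammaTheta := QuotientGroup.eq.1 hij
        rw [mul_one] at h'
        exact hL (by simpa using inv_mem h')
      · exact absurd (QuotientGroup.eq.1 hij) hLT
      · rfl
    · intro q
      induction q using QuotientGroup.induction_on with
      | H g =>
        rcases hpart g with h | h | h
        · exact ⟨0, (QuotientGroup.eq.2 (by simpa using h))⟩
        · exact ⟨1, (QuotientGroup.eq.2 (by simpa using h))⟩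
        · exact ⟨2, (QuotientGroup.eq.2 (by simpa using h))⟩
  have : Nat.card (SL2Z ⧸ GammaTheta) = Nat.card (Fin 3) :=
    Nat.card_congr (Equiv.ofBijective _ hbij).symm
  have hidx : GammaTheta.index = Nat.card (SL2Z ⧸ GammaTheta) := rfl
  rw [hidx, this, Nat.card_eq_fintype_card, Fintype.card_fin]
end

section
/- Let n = 2r be even with r ≥ 4. For each divisor d of n with 2n | d² and each integer ℓ with ℓ² ≡ 1 (mod 2d²/n), the ℤ/nℤ-indexed 0-1 matrix B̃(d,ℓ) defined by B̃(d,ℓ)_{a,b} = 1 iff n | d·a and b ≡ aℓ (mod d) commutes with T̃, where T̃_{a,b} = δ_{a,b}·exp(πi a²/n). -/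
open Complex

/-- The diagonal matrix `T̃`, with `T̃_{a,a} = exp(πi a²/n)`. -/
noncomputable def Ttilde (n : ℕ) : Matrix (ZMod n) (ZMod n) ℂ :=
  fun a b => if a = b then Complex.exp (Real.pi * Complex.I * ((a.val : ℂ) ^ 2) / n) else 0

/-!
`T̃` is diagonal, so `B̃(d,ℓ)` commutes with it as soon as `exp(πi a²/n) = exp(πi b²/n)` whenever
`B̃(d,ℓ)_{a,b} ≠ 0`, i.e. as soon as `a² ≡ b² (mod 2n)` there. Writing `d a = n t` and `b = a ℓ + d k`,
`b² - a² = a² (ℓ² - 1) + 2 n ℓ k t + d² k²`; the last term is divisible by `2n` since `2n ∣ d²`,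
and the first since `(2d²/n) ∣ ℓ² - 1` and `a² · (2d²/n) = 2 n t²`.
-/

theorem Int.sq_modEq_sq_of_dvd {n d M ℓ a b : ℤ} (hn : n ≠ 0) (hnd : 2 * n ∣ d ^ 2)
    (hM : M * n = 2 * d ^ 2) (hl : ℓ ^ 2 ≡ 1 [ZMOD M]) (ha : n ∣ d * a) (hb : d ∣ b - a * ℓ) :
    a ^ 2 ≡ b ^ 2 [ZMOD 2 * n] := by
  obtain ⟨t, ht⟩ := ha
  obtain ⟨k, hk⟩ := hb
  obtain ⟨m, hm⟩ := Int.modEq_iff_dvd.mp hl.symm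
  obtain ⟨s, hs⟩ := hnd
  have ha2M : a ^ 2 * M = 2 * n * t ^ 2 :=
    mul_left_cancel₀ hn (by linear_combination a ^ 2 * hM + 2 * (d * a + n * t) * ht)
  refine Int.modEq_iff_dvd.mpr ⟨t ^ 2 * m + ℓ * k * t + s * k ^ 2, ?_⟩
  linear_combination (b + a * ℓ + d * k) * hk + a ^ 2 * hm + m * ha2M + 2 * ℓ * k * ht
    + k ^ 2 * hs

theorem Complex.exp_pi_mul_I_mul_sq_div_eq_of_sq_modEq {n : ℕ} (hn : n ≠ 0) {x y : ℤ}
    (h : x ^ 2 ≡ y ^ 2 [ZMOD 2 * n]) :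
    exp (Real.pi * I * (x : ℂ) ^ 2 / n) = exp (Real.pi * I * (y : ℂ) ^ 2 / n) := by
  obtain ⟨j, hj⟩ := Int.modEq_iff_dvd.mp h.symm
  have hjC : (x : ℂ) ^ 2 - (y : ℂ) ^ 2 = 2 * n * j := by exact_mod_cast hj
  refine exp_eq_exp_iff_exists_int.mpr ⟨j, ?_⟩
  have hnC : (n : ℂ) ≠ 0 := Nat.cast_ne_zero.mpr hn
  field_simp
  linear_combination hjC

theorem Matrix.commute_diagonal_of_apply_ne_zero {ι α : Type*} [Fintype ι] [DecidableEq ι]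
    [CommSemiring α] {B : Matrix ι ι α} {f : ι → α} (h : ∀ a b, B a b ≠ 0 → f a = f b) :
    Commute B (diagonal f) := by
  ext a b
  rw [mul_diagonal, diagonal_mul]
  by_cases hab : B a b = 0
  · simp [hab]
  · rw [h a b hab, mul_comm]

theorem Ttilde_eq_diagonal (n : ℕ) :
    Ttilde n = Matrix.diagonal fun a => exp (Real.pi * I * ((a.val : ℂ) ^ 2) / n) := by
  ext a b
  simp only [Ttilde, Matrix.diagonal_apply]

theorem Btilde_commute_Ttilde_general (n d : ℕ) [NeZero n]
    (hnd : 2 * n ∣ d ^ 2) (ℓ : ℤ)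
    (hl : ℓ ^ 2 ≡ 1 [ZMOD ((2 * d ^ 2 / n : ℕ) : ℤ)]) :
    Btilde n d ℓ * Ttilde n = Ttilde n * Btilde n d ℓ := by
  have hM : ((2 * d ^ 2 / n : ℕ) : ℤ) * n = 2 * (d : ℤ) ^ 2 := by
    exact_mod_cast Nat.div_mul_cancel ((dvd_mul_left n 2).trans (hnd.trans (dvd_mul_left _ 2)))
  rw [Ttilde_eq_diagonal]
  refine Matrix.commute_diagonal_of_apply_ne_zero fun a b hab => ?_
  obtain ⟨ha, hb⟩ : n ∣ d * a.val ∧ (d : ℤ) ∣ (b.val : ℤ) - (a.val : ℤ) * ℓ := by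
    by_contra h
    exact hab (if_neg h)
  have hsq := Int.sq_modEq_sq_of_dvd (Int.natCast_ne_zero.mpr (NeZero.ne n))
    (by exact_mod_cast hnd) hM hl (by exact_mod_cast ha) hb
  simpa using exp_pi_mul_I_mul_sq_div_eq_of_sq_modEq (NeZero.ne n) hsq

/-- For even `n = 2r`, `r ≥ 4`: if `d ∣ n`, `2n ∣ d²` and `ℓ² ≡ 1 (mod 2d²/n)`,
then `B̃(d,ℓ)` commutes with `T̃`. -/
theorem Btilde_commute_Ttilde (r n d : ℕ) [NeZero n] (hr : 4 ≤ r) (hn : n = 2 * r)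
    (hd : d ∣ n) (hnd : 2 * n ∣ d ^ 2) (ℓ : ℤ)
    (hl : ℓ ^ 2 ≡ 1 [ZMOD ((2 * d ^ 2 / n : ℕ) : ℤ)]) :
    Btilde n d ℓ * Ttilde n = Ttilde n * Btilde n d ℓ :=
  Btilde_commute_Ttilde_general n d hnd ℓ hl
end
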